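/- arXiv:1307.0371 — 4 statements merged into one kernel-verified Lean document; each statement's English description precedes it below -/
import Mathlib

section
/- Fix a real number q > 1 and an integer n ≥ 1. Let φ_1, …, φ_N : ℚ^n → ℚ be pairwise distinct linear functionals and let f_1, …, f_N ∈ ℚ[x_1,…,x_n] be nonzero polynomials. Then the functions x ↦ f_i(x)·q^{φ_i(x)}, viewed as functions from ℤ_{≥0}^n to ℝ, are linearly independent over ℝ: if α_1, …, α_N ∈ ℝ satisfy Σ_{i=1}^N α_i f_i(x) q^{φ_i(x)} = 0 for all x ∈ ℤ_{≥0}^n, then α_1 = ⋯ = α_N = 0. -/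
/-!
Pick `w ∈ ℕⁿ` at which every `f i` is nonzero and the values `φ i w` are pairwise distinct: this
is possible because the product of the `f i` and of the linear forms `φ i - φ j` is a nonzero
polynomial, and a nonzero polynomial over `ℚ` cannot vanish on all of `ℕⁿ`. Along the ray
`t ↦ t • w` the relation becomes `∑ i, α i * P i t * Q i ^ t = 0` with polynomials
`P i t = f i (t • w)` and pairwise distinct bases `Q i = q ^ φ i w`. A sequence `t ↦ P t * Q ^ t`
lies in the generalized eigenspace for the eigenvalue `Q` of the shift operator on sequences,
since `shift - Q` acts on it as `Q` times the forward difference of `P`. Generalized eigenspaces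
for distinct eigenvalues are independent, so every term vanishes, and `t = 1` gives
`α i * f i w = 0`.
-/

open Polynomial fwdDiff

section Shift

variable (R : Type*) [CommRing R]

noncomputable def sequenceShift : Module.End R (ℕ → R) := LinearMap.funLeft R R Nat.succ

variable {R}

lemma sequenceShift_sub_smul_mul_pow (Q : R) (u : ℕ → R) :
    (sequenceShift R - Q • 1) (fun t => u t * Q ^ t) = fun t => (Q • Δ_[1] u) t * Q ^ t := by
  ext t
  simp only [sequenceShift, LinearMap.sub_apply, LinearMap.smul_apply, Module.End.one_apply,
    Pi.sub_apply, LinearMap.funLeft_apply, Nat.succ_eq_add_one, pow_succ, Pi.smul_apply,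
    smul_eq_mul, fwdDiff]
  ring

lemma sequenceShift_sub_smul_pow_mul_pow (Q : R) (k : ℕ) (u : ℕ → R) :
    ((sequenceShift R - Q • 1) ^ k) (fun t => u t * Q ^ t) =
      fun t => Q ^ k * ((Δ_[1])^[k] u) t * Q ^ t := by
  induction k generalizing u with
  | zero => simp
  | succ k ih =>
    rw [pow_succ, Module.End.mul_apply, sequenceShift_sub_smul_mul_pow, ih,
      fwdDiff_iter_const_smul, Function.iterate_succ_apply]
    ext t
    simp only [Pi.smul_apply, smul_eq_mul]
    ring

lemma mul_pow_mem_maxGenEigenspace_sequenceShift {u : ℕ → R} {d : ℕ}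
    (hu : (Δ_[1])^[d] u = 0) (Q : R) :
    (fun t => u t * Q ^ t) ∈ (sequenceShift R).maxGenEigenspace Q := by
  rw [Module.End.mem_maxGenEigenspace]
  exact ⟨d, by ext t; simp [sequenceShift_sub_smul_pow_mul_pow, hu]⟩

lemma fwdDiff_iter_comp_natCast {M G : Type*} [AddCommMonoidWithOne M] [AddCommGroup G] (g : M → G)
    (k : ℕ) :
    (Δ_[1])^[k] (g ∘ Nat.cast) = ((Δ_[1])^[k] g) ∘ Nat.cast := by
  induction k generalizing g with
  | zero => rfl
  | succ k ih =>
    rw [Function.iterate_succ_apply, Function.iterate_succ_apply, ← ih]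
    congr 1
    ext t
    simp [fwdDiff]

lemma Polynomial.fwdDiff_iter_eval_natCast (P : R[X]) :
    (Δ_[1])^[P.natDegree + 1] (fun t : ℕ => P.eval (t : R)) = 0 := by
  rw [show (fun t : ℕ => P.eval (t : R)) = P.eval ∘ Nat.cast from rfl, fwdDiff_iter_comp_natCast,
    P.fwdDiff_iter_degree_add_one_eq_zero]
  rfl

theorem Polynomial.eval_natCast_eq_zero_of_sum_mul_pow_eq_zero [IsDomain R] {ι : Type*}
    [Fintype ι] {Q : ι → R} (hQ : Function.Injective Q) (hQ0 : ∀ i, Q i ≠ 0) {P : ι → R[X]}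
    (h : ∀ t : ℕ, ∑ i, (P i).eval (t : R) * Q i ^ t = 0) (i : ι) (t : ℕ) :
    (P i).eval (t : R) = 0 := by
  have hindep := (sequenceShift R).independent_maxGenEigenspace.comp hQ
  rw [iSupIndep_iff_finsetSum_eq_zero_imp_eq_zero] at hindep
  have hterm := hindep Finset.univ (fun i t => (P i).eval (t : R) * Q i ^ t)
    (fun i _ => mul_pow_mem_maxGenEigenspace_sequenceShift (P i).fwdDiff_iter_eval_natCast _)
    (by ext t; simpa using h t) i (Finset.mem_univ i)
  simpa [hQ0 i] using congr_fun hterm t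

end Shift

namespace MvPolynomial

variable {R σ : Type*} [CommRing R]

theorem exists_polynomial_eval_eq_eval_smul (p : MvPolynomial σ R) (v : σ → R) :
    ∃ P : R[X], ∀ t : R, P.eval t = eval (t • v) p := by
  refine ⟨aeval (fun j => Polynomial.C (v j) * Polynomial.X) p, fun t => ?_⟩
  have hv : (fun j => Polynomial.aeval t (Polynomial.C (v j) * Polynomial.X)) = t • v := by
    ext j
    simp only [map_mul, Polynomial.aeval_C, Polynomial.aeval_X, Algebra.algebraMap_self,
      RingHom.id_apply, Pi.smul_apply, smul_eq_mul, mul_comm]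
  rw [← Polynomial.coe_aeval_eq_eval, comp_aeval_apply, hv]
  rfl

theorem exists_eval_eq_linearMap [Fintype σ] (ψ : (σ → R) →ₗ[R] R) :
    ∃ L : MvPolynomial σ R, ∀ x, eval x L = ψ x := by
  classical
  refine ⟨∑ k, C (ψ fun j => if k = j then 1 else 0) * X k, fun x => ?_⟩
  simp [ψ.pi_apply_eq_sum_univ x, mul_comm]

variable [IsDomain R] [CharZero R]

theorem exists_natCast_eval_ne_zero {p : MvPolynomial σ R} (hp : p ≠ 0) :
    ∃ x : σ → ℕ, eval (fun i => (x i : R)) p ≠ 0 := by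
  by_contra! h
  refine hp (funext_set (fun _ => Set.range ((↑) : ℕ → R))
    (fun _ => Set.infinite_range_of_injective Nat.cast_injective) fun x hx => ?_)
  choose y hy using fun i => hx i (Set.mem_univ i)
  obtain rfl : (fun i => (y i : R)) = x := _root_.funext hy
  simpa using h y

theorem exists_natCast_eval_ne_zero_and_injective [Fintype σ] {ι : Type*} [Fintype ι]
    {f : ι → MvPolynomial σ R} (hf : ∀ i, f i ≠ 0) {φ : ι → (σ → R) →ₗ[R] R}
    (hφ : Function.Injective φ) :
    ∃ x : σ → ℕ, (∀ i, eval (fun j => (x j : R)) (f i) ≠ 0) ∧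
      Function.Injective fun i => φ i fun j => (x j : R) := by
  classical
  choose L hL using fun ψ : (σ → R) →ₗ[R] R => exists_eval_eq_linearMap ψ
  have hG : (∏ i, f i) * ∏ p ∈ Finset.univ.offDiag, L (φ p.1 - φ p.2) ≠ 0 := by
    refine mul_ne_zero (Finset.prod_ne_zero_iff.2 fun i _ => hf i)
      (Finset.prod_ne_zero_iff.2 fun p hp hL0 => (Finset.mem_offDiag.1 hp).2.2 (hφ ?_))
    refine sub_eq_zero.1 (LinearMap.ext fun x => ?_)
    simpa [hL0] using (hL (φ p.1 - φ p.2) x).symm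
  obtain ⟨x, hx⟩ := exists_natCast_eval_ne_zero hG
  simp only [map_mul, map_prod, hL, mul_ne_zero_iff, Finset.prod_ne_zero_iff] at hx
  refine ⟨x, fun i => hx.1 i (Finset.mem_univ i), fun i j hij => by_contra fun hne => ?_⟩
  exact hx.2 (i, j) (Finset.mem_offDiag.2 ⟨Finset.mem_univ _, Finset.mem_univ _, hne⟩)
    (by simpa [sub_eq_zero] using hij)

end MvPolynomial

theorem vfunction_linear_independence_general (q : ℝ) (hq : 1 < q) (n N : ℕ)
    (φ : Fin N → ((Fin n → ℚ) →ₗ[ℚ] ℚ)) (hφ : Function.Injective φ)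
    (f : Fin N → MvPolynomial (Fin n) ℚ) (hf : ∀ i, f i ≠ 0)
    (α : Fin N → ℝ)
    (h : ∀ x : Fin n → ℕ,
      ∑ i : Fin N, α i * ((MvPolynomial.eval (fun j => (x j : ℚ)) (f i) : ℚ) : ℝ) *
        q ^ (((φ i) (fun j => (x j : ℚ)) : ℚ) : ℝ) = 0) :
    ∀ i, α i = 0 := by
  obtain ⟨w, hfw, hφw⟩ := MvPolynomial.exists_natCast_eval_ne_zero_and_injective hf hφ
  set Q : Fin N → ℝ := fun i => q ^ ((φ i fun j => (w j : ℚ) : ℚ) : ℝ) with hQ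
  have hQ_inj : Function.Injective Q :=
    (Real.strictMono_rpow_of_base_gt_one hq).injective.comp (Rat.cast_injective.comp hφw)
  have hQ_ne : ∀ i, Q i ≠ 0 := fun i => (Real.rpow_pos_of_pos (by linarith) _).ne'
  choose P hP using fun i => (f i).exists_polynomial_eval_eq_eval_smul fun j => (w j : ℚ)
  have hray : ∀ t : ℕ,
      ∑ i, (C (α i) * (P i).map (algebraMap ℚ ℝ)).eval (t : ℝ) * Q i ^ t = 0 := by
    intro t
    rw [← h (t • w)]
    refine Finset.sum_congr rfl fun i _ => ?_
    have hx : (fun j => (((t • w) j : ℕ) : ℚ)) = (t : ℚ) • fun j => (w j : ℚ) := by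
      ext j; simp
    rw [hx, map_smul, hQ, ← Real.rpow_mul_natCast (by linarith), eval_mul, eval_C,
      eval_natCast_map, hP, eq_ratCast]
    simp [mul_comm]
  intro i
  have hαf := eval_natCast_eq_zero_of_sum_mul_pow_eq_zero hQ_inj hQ_ne hray i 1
  rw [eval_mul, eval_C, eval_natCast_map, hP, eq_ratCast, Nat.cast_one, one_smul] at hαf
  simpa [hfw i] using hαf

/-- Linear independence of the functions `x ↦ f_i(x)·q^{φ_i(x)}` on `ℤ_{≥0}^n`, for
pairwise distinct linear functionals `φ_i : ℚ^n → ℚ` and nonzero polynomials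
`f_i ∈ ℚ[x_1,…,x_n]`, where `q > 1` is a fixed real number. -/
theorem vfunction_linear_independence (q : ℝ) (hq : 1 < q) (n N : ℕ) (hn : 1 ≤ n)
    (φ : Fin N → ((Fin n → ℚ) →ₗ[ℚ] ℚ)) (hφ : Function.Injective φ)
    (f : Fin N → MvPolynomial (Fin n) ℚ) (hf : ∀ i, f i ≠ 0)
    (α : Fin N → ℝ)
    (h : ∀ x : Fin n → ℕ,
      ∑ i : Fin N, α i * ((MvPolynomial.eval (fun j => (x j : ℚ)) (f i) : ℚ) : ℝ) *
        q ^ (((φ i) (fun j => (x j : ℚ)) : ℚ) : ℝ) = 0) :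
    ∀ i, α i = 0 :=
  vfunction_linear_independence_general q hq n N φ hφ f hf α h
end

section
/- Fix a real number q > 1 and an integer n ≥ 1. Let R(x) = Σ_{i=1}^N α_i f_i(x) q^{φ_i(x)} be a function on ℤ_{≥0}^n, where α_1, …, α_N ∈ ℂ are nonzero, f_1, …, f_N ∈ ℚ[x_1,…,x_n] are nonzero polynomials, and φ_1, …, φ_N : ℚ^n → ℚ are pairwise distinct linear functionals. Then the following are equivalent: (a) there are no p, v ∈ ℤ_{≥0}^n such that |R(p + m·v)| → ∞ as m → ∞; (b) for every e ∈ ℤ_{≥0}^n and every i one has φ_i(e) ≤ 0, and moreover if φ_i(e) = 0 then the directional derivative Σ_{j=1}^n e_j · ∂f_i/∂x_j is the zero polynomial. -/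
/-- The V-function `x ↦ Σ_i α_i · f_i(x) · q^{φ_i(x)}` on `ℤ_{≥0}^n`. -/
noncomputable def Vfun (q : ℝ) {n N : ℕ} (α : Fin N → ℂ)
    (f : Fin N → MvPolynomial (Fin n) ℚ) (φ : Fin N → ((Fin n → ℚ) →ₗ[ℚ] ℚ))
    (x : Fin n → ℕ) : ℂ :=
  ∑ i : Fin N, α i * ((MvPolynomial.eval (fun j => (x j : ℚ)) (f i) : ℚ) : ℂ) *
    ((q ^ (((φ i) (fun j => (x j : ℚ)) : ℚ) : ℝ) : ℝ) : ℂ)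

/-!
Along a ray `x + m • e` the V-function is `m ↦ Σ_i P_i(m) r_i^m` with `r_i = q^{φ_i(e)}` and
`P_i(m) = α_i q^{φ_i(x)} f_i(x + m • e)`; for `R = max r_i` it equals
`R^m ((Σ_{r_i = R} P_i)(m) + o(1))`. Under (b) every `r_i ≤ 1` and the `P_i` with `r_i = 1` are
constant, so the values along any ray converge. If (b) fails in the direction `e`, then
either `R > 1`, or `R = 1` and some `P_i` with `r_i = 1` is nonconstant. The dominant
polynomial (resp. its derivative) takes at `0` the value at `x` of the V-function of the
dominant terms (resp. of their directional derivatives), and a suitable `x` makes that value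
nonzero, because the functions `x ↦ f(x) q^{φ(x)}` with distinct `φ` are linearly independent
on `ℤ_{≥0}^n`: in a direction that separates two of the `φ_i` the dominant terms form a proper
subfamily, which gives an induction.
-/

open Filter Polynomial Topology

namespace MvPolynomial

theorem exists_natCast_eval_ne_zero_s6 {σ R : Type*} [CommRing R] [IsDomain R] [CharZero R]
    {g : MvPolynomial σ R} (hg : g ≠ 0) :
    ∃ x : σ → ℕ, eval (fun j => (x j : R)) g ≠ 0 := by
  by_contra! h
  refine hg (funext_set (fun _ => Set.range Nat.cast)
    (fun _ => Set.infinite_range_of_injective Nat.cast_injective) fun x hx => ?_)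
  choose y hy using fun j => hx j trivial
  simpa [← _root_.funext hy] using h y

variable {σ R : Type*} [CommSemiring R]

noncomputable def dirDeriv [Fintype σ] (v : σ → R) (g : MvPolynomial σ R) :
    MvPolynomial σ R :=
  ∑ j, C (v j) * pderiv j g

noncomputable def restrictToLine (x v : σ → R) (g : MvPolynomial σ R) : R[X] :=
  aeval (fun j => Polynomial.C (x j) + Polynomial.C (v j) * Polynomial.X) g

theorem eval_restrictToLine (x v : σ → R) (g : MvPolynomial σ R) (t : R) :
    (restrictToLine x v g).eval t = eval (fun j => x j + t * v j) g := by
  rw [restrictToLine, ← Polynomial.coe_aeval_eq_eval, comp_aeval_apply]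
  simp only [map_add, map_mul, Polynomial.aeval_C, Polynomial.aeval_X, Algebra.algebraMap_self,
    RingHom.id_apply]
  simp_rw [mul_comm t]
  rfl

section DirectionalDerivative

variable [Fintype σ] (v : σ → R)

theorem dirDeriv_add (p q : MvPolynomial σ R) :
    dirDeriv v (p + q) = dirDeriv v p + dirDeriv v q := by
  simp [dirDeriv, mul_add, Finset.sum_add_distrib]

theorem dirDeriv_C (a : R) : dirDeriv v (C a) = 0 := by
  simp [dirDeriv]

theorem dirDeriv_mul (p q : MvPolynomial σ R) :
    dirDeriv v (p * q) = dirDeriv v p * q + p * dirDeriv v q := by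
  simp only [dirDeriv, Derivation.leibniz, smul_eq_mul, mul_add, Finset.sum_add_distrib,
    Finset.sum_mul, Finset.mul_sum]
  rw [add_comm]
  congr 1 <;> exact Finset.sum_congr rfl fun _ _ => by ring

theorem dirDeriv_X [DecidableEq σ] (j : σ) : dirDeriv v (X j) = C (v j) := by
  simp [dirDeriv, pderiv_X, Pi.single_apply]

theorem derivative_restrictToLine (x : σ → R) (g : MvPolynomial σ R) :
    derivative (restrictToLine x v g) = restrictToLine x v (dirDeriv v g) := by
  classical
  induction g using MvPolynomial.induction_on with
  | C a => simp [restrictToLine, dirDeriv_C]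
  | add p q hp hq =>
    simp only [restrictToLine, dirDeriv_add, map_add] at *
    rw [hp, hq]
  | mul_X p j hp =>
    simp only [restrictToLine, dirDeriv_mul, dirDeriv_X, map_add, map_mul, derivative_mul,
      aeval_X, aeval_C] at *
    rw [hp]
    simp

end DirectionalDerivative

end MvPolynomial

theorem LinearMap.exists_natCast_apply_ne {σ K M : Type*} [Finite σ] [Semiring K]
    [AddCommMonoid M] [Module K M] {φ ψ : (σ → K) →ₗ[K] M} (h : φ ≠ ψ) :
    ∃ e : σ → ℕ, φ (fun j => e j) ≠ ψ (fun j => e j) := by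
  classical
  have := Fintype.ofFinite σ
  by_contra! H
  refine h ((Pi.basisFun K σ).ext fun j => ?_)
  convert H (Pi.single j 1) using 2 <;> ext i <;> simp [Pi.single_apply]

namespace Polynomial

theorem tendsto_eval_natCast_mul_pow_nhds_zero (P : ℂ[X]) {r : ℂ} (hr : ‖r‖ < 1) :
    Tendsto (fun m : ℕ => P.eval (m : ℂ) * r ^ m) atTop (𝓝 0) := by
  simp_rw [eval_eq_sum_range, Finset.sum_mul]
  rw [← Finset.sum_const_zero (s := Finset.range (P.natDegree + 1))]
  refine tendsto_finsetSum _ fun k _ => ?_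
  have h := isLittleO_pow_const_mul_const_pow_const_pow_of_norm_lt k (r₂ := 1) hr
  simp only [one_pow, Asymptotics.isLittleO_one_iff] at h
  simpa [mul_assoc] using h.const_mul (P.coeff k)

theorem exists_pos_eventually_le_norm_eval_natCast {P : ℂ[X]} (hP : P ≠ 0) :
    ∃ ε > 0, ∀ᶠ m : ℕ in atTop, ε ≤ ‖P.eval (m : ℂ)‖ := by
  by_cases hd : 0 < degree P
  · refine ⟨1, one_pos, (P.tendsto_norm_atTop hd ?_).eventually_ge_atTop 1⟩
    simpa using tendsto_natCast_atTop_atTop (R := ℝ)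
  · rw [eq_C_of_degree_le_zero (not_lt.mp hd)] at hP ⊢
    exact ⟨_, norm_pos_iff.mpr (C_ne_zero.mp hP), by simp⟩

theorem eq_zero_of_tendsto_eval_natCast_nhds_zero {P : ℂ[X]}
    (h : Tendsto (fun m : ℕ => P.eval (m : ℂ)) atTop (𝓝 0)) : P = 0 := by
  by_contra hP
  obtain ⟨ε, hε, hle⟩ := exists_pos_eventually_le_norm_eval_natCast hP
  obtain ⟨m, hm, hlt⟩ := (hle.and (h.norm.eventually (gt_mem_nhds (by simpa using hε)))).exists
  exact hm.not_gt hlt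

end Polynomial

theorem Filter.Tendsto.norm_atTop_of_sub_tendsto_zero {α E : Type*} [SeminormedAddCommGroup E]
    {l : Filter α} {u v : α → E} (hv : Tendsto (fun a => ‖v a‖) l atTop)
    (h : Tendsto (fun a => u a - v a) l (𝓝 0)) : Tendsto (fun a => ‖u a‖) l atTop := by
  refine tendsto_atTop_mono (fun a => ?_) (hv.atTop_add h.norm.neg)
  have := norm_sub_le (u a) (u a - v a)
  rw [sub_sub_cancel] at this
  linarith

section ExpPolySum

variable {ι : Type*} (s : Finset ι) (P : ι → ℂ[X]) (r : ι → ℝ)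

noncomputable def expPolySum (m : ℕ) : ℂ :=
  ∑ i ∈ s, (P i).eval (m : ℂ) * (r i : ℂ) ^ m

theorem tendsto_expPolySum_div_pow_sub {R : ℝ} (hR : 0 < R)
    (hr : ∀ i ∈ s, 0 ≤ r i ∧ r i ≤ R) :
    Tendsto (fun m : ℕ => expPolySum s P r m / (R : ℂ) ^ m
      - (∑ i ∈ s with r i = R, P i).eval (m : ℂ)) atTop (𝓝 0) := by
  have hR' : (R : ℂ) ≠ 0 := by exact_mod_cast hR.ne'
  have hsplit : ∀ m : ℕ, expPolySum s P r m / (R : ℂ) ^ m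
      - (∑ i ∈ s with r i = R, P i).eval (m : ℂ)
      = ∑ i ∈ s with r i ≠ R, (P i).eval (m : ℂ) * ((r i / R : ℝ) : ℂ) ^ m := by
    intro m
    rw [expPolySum, eval_finsetSum, Finset.sum_div,
      ← Finset.sum_filter_add_sum_filter_not s (fun i => r i = R), add_sub_right_comm,
      ← Finset.sum_sub_distrib, Finset.sum_eq_zero, zero_add]
    · refine Finset.sum_congr rfl fun i _ => ?_
      push_cast
      rw [div_pow, mul_div_assoc]
    · intro i hi
      rw [(Finset.mem_filter.mp hi).2]
      field_simp
      ring
  simp_rw [hsplit]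
  rw [← Finset.sum_const_zero (s := s.filter (fun i => r i ≠ R))]
  refine tendsto_finsetSum _ fun i hi => (P i).tendsto_eval_natCast_mul_pow_nhds_zero ?_
  obtain ⟨hi, hne⟩ := Finset.mem_filter.mp hi
  rw [Complex.norm_real, Real.norm_eq_abs, abs_div, abs_of_nonneg (hr i hi).1, abs_of_pos hR,
    div_lt_one hR]
  exact lt_of_le_of_ne (hr i hi).2 hne

theorem sum_filter_eq_zero_of_expPolySum_eq_zero {R : ℝ} (hR : 0 < R)
    (hr : ∀ i ∈ s, 0 ≤ r i ∧ r i ≤ R) (h : ∀ m, expPolySum s P r m = 0) :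
    ∑ i ∈ s with r i = R, P i = 0 := by
  apply eq_zero_of_tendsto_eval_natCast_nhds_zero
  simpa [h] using (tendsto_expPolySum_div_pow_sub s P r hR hr).neg

theorem tendsto_norm_expPolySum_atTop_of_one_lt {R : ℝ} (hR : 1 < R)
    (hr : ∀ i ∈ s, 0 ≤ r i ∧ r i ≤ R) (hP : ∑ i ∈ s with r i = R, P i ≠ 0) :
    Tendsto (fun m => ‖expPolySum s P r m‖) atTop atTop := by
  set L := ∑ i ∈ s with r i = R, P i
  obtain ⟨ε, hε, hle⟩ := exists_pos_eventually_le_norm_eval_natCast hP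
  have hsub := (tendsto_expPolySum_div_pow_sub s P r (by linarith) hr).norm.eventually
    (gt_mem_nhds (show ‖(0 : ℂ)‖ < ε / 2 by simpa using half_pos hε))
  refine tendsto_atTop_mono' _ ?_
    ((tendsto_pow_atTop_atTop_of_one_lt hR).const_mul_atTop (half_pos hε))
  filter_upwards [hle, hsub] with m hm hm'
  have hRm : ‖(R : ℂ) ^ m‖ = R ^ m := by
    rw [norm_pow, Complex.norm_real, Real.norm_of_nonneg (by linarith)]
  have : ε / 2 ≤ ‖expPolySum s P r m / (R : ℂ) ^ m‖ := by
    have := norm_sub_norm_le (L.eval (m : ℂ))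
      (L.eval (m : ℂ) - expPolySum s P r m / (R : ℂ) ^ m)
    rw [sub_sub_cancel, norm_sub_rev] at this
    linarith
  rw [norm_div, hRm, le_div_iff₀ (by positivity)] at this
  linarith

theorem tendsto_norm_expPolySum_atTop_of_degree_pos (hr : ∀ i ∈ s, 0 ≤ r i ∧ r i ≤ 1)
    (hP : 0 < degree (∑ i ∈ s with r i = 1, P i)) :
    Tendsto (fun m => ‖expPolySum s P r m‖) atTop atTop := by
  refine (tendsto_norm_atTop _ hP (z := fun m : ℕ => (m : ℂ)) ?_)
    |>.norm_atTop_of_sub_tendsto_zero ?_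
  · simpa using tendsto_natCast_atTop_atTop (R := ℝ)
  · simpa using tendsto_expPolySum_div_pow_sub s P r one_pos hr

theorem tendsto_expPolySum_of_derivative_eq_zero (hr : ∀ i ∈ s, 0 ≤ r i ∧ r i ≤ 1)
    (hP : derivative (∑ i ∈ s with r i = 1, P i) = 0) :
    Tendsto (expPolySum s P r) atTop (𝓝 ((∑ i ∈ s with r i = 1, P i).coeff 0)) := by
  have h := tendsto_expPolySum_div_pow_sub s P r one_pos hr
  rw [eq_C_of_derivative_eq_zero hP] at h
  simpa only [eval_C, Complex.ofReal_one, one_pow, div_one, sub_add_cancel, zero_add] using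
    h.add_const ((∑ i ∈ s with r i = 1, P i).coeff 0)

end ExpPolySum

namespace Vfun

open MvPolynomial (dirDeriv restrictToLine)

variable {σ ι : Type*} (q : ℝ) (β : ι → ℂ) (g : ι → MvPolynomial σ ℚ)
  (φ : ι → ((σ → ℚ) →ₗ[ℚ] ℚ))

noncomputable def onFinset (s : Finset ι) (x : σ → ℕ) : ℂ :=
  ∑ i ∈ s, β i * ((MvPolynomial.eval (fun j => (x j : ℚ)) (g i) : ℚ) : ℂ) *
    ((q ^ (((φ i) (fun j => (x j : ℚ)) : ℚ) : ℝ) : ℝ) : ℂ)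

theorem eq_onFinset_univ {n N : ℕ} (α : Fin N → ℂ) (f : Fin N → MvPolynomial (Fin n) ℚ)
    (φ : Fin N → ((Fin n → ℚ) →ₗ[ℚ] ℚ)) :
    Vfun q α f φ = onFinset q α f φ Finset.univ :=
  rfl

noncomputable def rate (e : σ → ℕ) (i : ι) : ℝ :=
  q ^ ((φ i (fun j => (e j : ℚ)) : ℚ) : ℝ)

theorem rate_pos (hq : 0 < q) (e : σ → ℕ) (i : ι) : 0 < rate q φ e i :=
  Real.rpow_pos_of_pos hq _

theorem one_lt_rate_iff (hq : 1 < q) {e : σ → ℕ} {i : ι} :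
    1 < rate q φ e i ↔ 0 < φ i (fun j => (e j : ℚ)) := by
  rw [rate, ← Real.rpow_zero q, Real.rpow_lt_rpow_left_iff hq, Rat.cast_pos]

theorem rate_le_one_iff (hq : 1 < q) {e : σ → ℕ} {i : ι} :
    rate q φ e i ≤ 1 ↔ φ i (fun j => (e j : ℚ)) ≤ 0 := by
  rw [← not_lt, one_lt_rate_iff q φ hq, not_lt]

theorem rate_eq_one_iff (hq : 1 < q) {e : σ → ℕ} {i : ι} :
    rate q φ e i = 1 ↔ φ i (fun j => (e j : ℚ)) = 0 := by
  rw [rate, ← Real.rpow_zero q, Real.rpow_right_inj (by linarith) hq.ne', Rat.cast_eq_zero]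

noncomputable def linePoly (x e : σ → ℕ) (i : ι) : ℂ[X] :=
  Polynomial.C (β i * ((q ^ (((φ i) (fun j => (x j : ℚ)) : ℚ) : ℝ) : ℝ) : ℂ)) *
    (restrictToLine (fun j => (x j : ℚ)) (fun j => (e j : ℚ)) (g i)).map (algebraMap ℚ ℂ)

theorem eval_natCast_linePoly (x e : σ → ℕ) (i : ι) (m : ℕ) :
    (linePoly q β g φ x e i).eval (m : ℂ) =
      β i * ((q ^ (((φ i) (fun j => (x j : ℚ)) : ℚ) : ℝ) : ℝ) : ℂ) *
        ((MvPolynomial.eval (fun j => ((x j + m * e j : ℕ) : ℚ)) (g i) : ℚ) : ℂ) := by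
  rw [linePoly, eval_mul, eval_C, eval_natCast_map, MvPolynomial.eval_restrictToLine]
  push_cast
  rfl

theorem rpow_apply_add_mul (hq : 0 < q) (ψ : (σ → ℚ) →ₗ[ℚ] ℚ) (x e : σ → ℕ)
    (m : ℕ) :
    q ^ ((ψ (fun j => ((x j + m * e j : ℕ) : ℚ)) : ℚ) : ℝ) =
      q ^ ((ψ (fun j => (x j : ℚ)) : ℚ) : ℝ) *
        (q ^ ((ψ (fun j => (e j : ℚ)) : ℚ) : ℝ)) ^ m := by
  have hpt : (fun j => ((x j + m * e j : ℕ) : ℚ)) =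
      (fun j => (x j : ℚ)) + (m : ℚ) • (fun j => (e j : ℚ)) := by
    ext j; push_cast; simp
  rw [hpt, map_add, map_smul, smul_eq_mul, Rat.cast_add, Rat.cast_mul, Rat.cast_natCast,
    Real.rpow_add hq, mul_comm (m : ℝ), Real.rpow_mul_natCast hq.le]

theorem onFinset_add_mul (hq : 0 < q) (s : Finset ι) (x e : σ → ℕ) (m : ℕ) :
    onFinset q β g φ s (fun j => x j + m * e j) =
      expPolySum s (linePoly q β g φ x e) (rate q φ e) m := by
  refine Finset.sum_congr rfl fun i _ => ?_
  rw [eval_natCast_linePoly, rate, rpow_apply_add_mul q hq]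
  push_cast
  ring

theorem eval_zero_sum_linePoly (s : Finset ι) (x e : σ → ℕ) :
    (∑ i ∈ s, linePoly q β g φ x e i).eval 0 = onFinset q β g φ s x := by
  rw [eval_finsetSum]
  refine Finset.sum_congr rfl fun i _ => ?_
  simpa [mul_right_comm] using eval_natCast_linePoly q β g φ x e i 0

theorem derivative_linePoly [Fintype σ] (x e : σ → ℕ) (i : ι) :
    derivative (linePoly q β g φ x e i)
      = linePoly q β (fun i => dirDeriv (fun j => (e j : ℚ)) (g i)) φ x e i := by
  simp [linePoly, derivative_map, MvPolynomial.derivative_restrictToLine]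

theorem exists_onFinset_add_mul_ne_zero (hq : 0 < q) {s : Finset ι} {x e : σ → ℕ} {R : ℝ}
    (hR : 0 < R) (hr : ∀ i ∈ s, rate q φ e i ≤ R)
    (hx : onFinset q β g φ {i ∈ s | rate q φ e i = R} x ≠ 0) :
    ∃ m : ℕ, onFinset q β g φ s (fun j => x j + m * e j) ≠ 0 := by
  by_contra! h
  simp_rw [onFinset_add_mul q β g φ hq] at h
  refine hx ?_
  rw [← eval_zero_sum_linePoly q β g φ _ x e, sum_filter_eq_zero_of_expPolySum_eq_zero s _ _
    hR (fun i hi => ⟨(rate_pos q φ hq e i).le, hr i hi⟩) h, eval_zero]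

theorem exists_onFinset_ne_zero [Finite σ] (hq₀ : 0 < q) (hq₁ : q ≠ 1) (s : Finset ι)
    (hs : s.Nonempty) (hβ : ∀ i ∈ s, β i ≠ 0) (hg : ∀ i ∈ s, g i ≠ 0)
    (hφ : Set.InjOn φ s) : ∃ x, onFinset q β g φ s x ≠ 0 := by
  induction s using Finset.strongInduction with
  | H s ih =>
  obtain ⟨i, rfl⟩ | ⟨i₀, hi₀, i₁, hi₁, hne⟩ := hs.exists_eq_singleton_or_nontrivial
  · obtain ⟨x, hx⟩ :=
      MvPolynomial.exists_natCast_eval_ne_zero_s6 (hg i (Finset.mem_singleton_self i))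
    refine ⟨x, ?_⟩
    simp [onFinset, hβ, hx, (Real.rpow_pos_of_pos hq₀ _).ne']
  obtain ⟨e, he⟩ := LinearMap.exists_natCast_apply_ne (hφ.ne hi₀ hi₁ hne)
  set R := s.sup' hs (rate q φ e)
  have hTs : {i ∈ s | rate q φ e i = R} ⊂ s := by
    refine Finset.filter_ssubset.mpr ?_
    by_contra! hall
    refine he ?_
    have := (hall i₀ hi₀).trans (hall i₁ hi₁).symm
    rwa [rate, rate, Real.rpow_right_inj hq₀ hq₁, Rat.cast_inj] at this
  obtain ⟨k, hk, hkR⟩ := Finset.exists_mem_eq_sup' hs (rate q φ e)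
  obtain ⟨x, hx⟩ := ih _ hTs ⟨k, Finset.mem_filter.mpr ⟨hk, hkR.symm⟩⟩
    (fun i hi => hβ i (hTs.subset hi)) (fun i hi => hg i (hTs.subset hi))
    (hφ.mono (Finset.coe_subset.mpr hTs.subset))
  obtain ⟨m, hm⟩ := exists_onFinset_add_mul_ne_zero q β g φ hq₀
    (rate_pos q φ hq₀ e k |>.trans_eq hkR.symm) (fun i hi => Finset.le_sup' _ hi) hx
  exact ⟨_, hm⟩

theorem exists_tendsto_norm_onFinset_atTop_of_pos [Finite σ] (hq : 1 < q) {s : Finset ι}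
    (hβ : ∀ i ∈ s, β i ≠ 0) (hg : ∀ i ∈ s, g i ≠ 0) (hφ : Set.InjOn φ s)
    {e : σ → ℕ} {i : ι} (hi : i ∈ s) (hpos : 0 < φ i (fun j => (e j : ℚ))) :
    ∃ x : σ → ℕ, Tendsto (fun m : ℕ => ‖onFinset q β g φ s (fun j => x j + m * e j)‖)
      atTop atTop := by
  have hq₀ : 0 < q := by linarith
  set R := s.sup' ⟨i, hi⟩ (rate q φ e)
  have hR : 1 < R := ((one_lt_rate_iff q φ hq).mpr hpos).trans_le (Finset.le_sup' _ hi)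
  obtain ⟨k, hk, hkR⟩ := Finset.exists_mem_eq_sup' ⟨i, hi⟩ (rate q φ e)
  have hTs : {i ∈ s | rate q φ e i = R} ⊆ s := Finset.filter_subset _ _
  obtain ⟨x, hx⟩ := exists_onFinset_ne_zero q β g φ hq₀ hq.ne' _
    ⟨k, Finset.mem_filter.mpr ⟨hk, hkR.symm⟩⟩ (fun i hi => hβ i (hTs hi))
    (fun i hi => hg i (hTs hi)) (hφ.mono (Finset.coe_subset.mpr hTs))
  refine ⟨x, ?_⟩
  simp_rw [onFinset_add_mul q β g φ hq₀]
  refine tendsto_norm_expPolySum_atTop_of_one_lt s _ _ hR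
    (fun k hk => ⟨(rate_pos q φ hq₀ e k).le, Finset.le_sup' _ hk⟩) fun h => hx ?_
  rw [← eval_zero_sum_linePoly q β g φ _ x e, h, eval_zero]

theorem exists_tendsto_norm_onFinset_atTop_of_dirDeriv_ne_zero [Fintype σ] (hq : 1 < q)
    {s : Finset ι} (hβ : ∀ i ∈ s, β i ≠ 0) (hφ : Set.InjOn φ s) {e : σ → ℕ}
    (hle : ∀ k ∈ s, φ k (fun j => (e j : ℚ)) ≤ 0) {i : ι} (hi : i ∈ s)
    (hi₀ : φ i (fun j => (e j : ℚ)) = 0) (hD : dirDeriv (fun j => (e j : ℚ)) (g i) ≠ 0) :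
    ∃ x : σ → ℕ, Tendsto (fun m : ℕ => ‖onFinset q β g φ s (fun j => x j + m * e j)‖)
      atTop atTop := by
  have hq₀ : 0 < q := by linarith
  set D := fun k => dirDeriv (fun j => (e j : ℚ)) (g k)
  set T := {k ∈ s | rate q φ e k = 1}
  have hT's : {k ∈ T | D k ≠ 0} ⊆ s :=
    (Finset.filter_subset _ _).trans (Finset.filter_subset _ _)
  obtain ⟨x, hx⟩ := exists_onFinset_ne_zero q β D φ hq₀ hq.ne' _
    ⟨i, by simp [T, hi, hD, D, (rate_eq_one_iff q φ hq).mpr hi₀]⟩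
    (fun k hk => hβ k (hT's hk)) (fun k hk => (Finset.mem_filter.mp hk).2)
    (hφ.mono (Finset.coe_subset.mpr hT's))
  refine ⟨x, ?_⟩
  simp_rw [onFinset_add_mul q β g φ hq₀]
  refine tendsto_norm_expPolySum_atTop_of_degree_pos s _ _
    (fun k hk => ⟨(rate_pos q φ hq₀ e k).le, (rate_le_one_iff q φ hq).mpr (hle k hk)⟩)
    (natDegree_pos_iff_degree_pos.mp (Nat.pos_of_ne_zero (derivative_ne_zero.mp fun h => hx ?_)))
  calc onFinset q β D φ {k ∈ T | D k ≠ 0} x = onFinset q β D φ T x :=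
        Finset.sum_filter_of_ne fun k _ hk hDk => hk (by simp [hDk])
    _ = (derivative (∑ k ∈ T, linePoly q β g φ x e k)).eval 0 := by
        simp only [derivative_sum, derivative_linePoly, eval_zero_sum_linePoly, D]
    _ = 0 := by rw [h, eval_zero]

theorem exists_tendsto_onFinset_add_mul [Fintype σ] (hq : 1 < q) (s : Finset ι) (x e : σ → ℕ)
    (hle : ∀ i ∈ s, φ i (fun j => (e j : ℚ)) ≤ 0)
    (hD : ∀ i ∈ s, φ i (fun j => (e j : ℚ)) = 0 →
      dirDeriv (fun j => (e j : ℚ)) (g i) = 0) :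
    ∃ L, Tendsto (fun m : ℕ => onFinset q β g φ s (fun j => x j + m * e j))
      atTop (𝓝 L) := by
  have hq₀ : 0 < q := by linarith
  simp_rw [onFinset_add_mul q β g φ hq₀]
  refine ⟨_, tendsto_expPolySum_of_derivative_eq_zero s _ _
    (fun k hk => ⟨(rate_pos q φ hq₀ e k).le, (rate_le_one_iff q φ hq).mpr (hle k hk)⟩) ?_⟩
  rw [derivative_sum]
  refine Finset.sum_eq_zero fun k hk => ?_
  obtain ⟨hk, hk₁⟩ := Finset.mem_filter.mp hk
  rw [derivative_linePoly]
  simp [linePoly, hD k hk ((rate_eq_one_iff q φ hq).mp hk₁), restrictToLine]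

end Vfun

open Vfun in
/-- For a V-function `R(x) = Σ α_i f_i(x) q^{φ_i(x)}` with nonzero coefficients `α_i`,
nonzero polynomials `f_i` and pairwise distinct linear functionals `φ_i`, the following are
equivalent: (a) there are no `p, v ∈ ℤ_{≥0}^n` with `|R(p + m·v)| → ∞`;
(b) for every `e ∈ ℤ_{≥0}^n` and every `i`, `φ_i(e) ≤ 0`, and if `φ_i(e) = 0` then the
directional derivative `Σ_j e_j ∂f_i/∂x_j` is the zero polynomial. -/
theorem vfunction_no_ray_blowup_iff (q : ℝ) (hq : 1 < q) (n N : ℕ)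
    (α : Fin N → ℂ) (hα : ∀ i, α i ≠ 0)
    (f : Fin N → MvPolynomial (Fin n) ℚ) (hf : ∀ i, f i ≠ 0)
    (φ : Fin N → ((Fin n → ℚ) →ₗ[ℚ] ℚ)) (hφ : Function.Injective φ) :
    (¬ ∃ P v : Fin n → ℕ, Filter.Tendsto
        (fun m : ℕ => ‖Vfun q α f φ (fun j => P j + m * v j)‖)
        Filter.atTop Filter.atTop) ↔
    (∀ e : Fin n → ℕ, ∀ i : Fin N,
      (φ i) (fun j => (e j : ℚ)) ≤ 0 ∧
      ((φ i) (fun j => (e j : ℚ)) = 0 →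
        ∑ j : Fin n, MvPolynomial.C (e j : ℚ) * MvPolynomial.pderiv j (f i) = 0)) := by
  simp only [eq_onFinset_univ]
  constructor
  · intro hbounded e i
    by_contra hbad
    refine hbounded ?_
    by_cases hpos : ∃ k, 0 < φ k (fun j => (e j : ℚ))
    · obtain ⟨k, hk⟩ := hpos
      obtain ⟨x, hx⟩ := exists_tendsto_norm_onFinset_atTop_of_pos q α f φ hq
        (fun i _ => hα i) (fun i _ => hf i) hφ.injOn (Finset.mem_univ k) hk
      exact ⟨x, e, hx⟩
    · simp only [not_exists, not_lt] at hpos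
      obtain ⟨hi₀, hD⟩ := Classical.not_imp.mp (not_and.mp hbad (hpos i))
      obtain ⟨x, hx⟩ := exists_tendsto_norm_onFinset_atTop_of_dirDeriv_ne_zero q α f φ hq
        (fun i _ => hα i) hφ.injOn (fun k _ => hpos k) (Finset.mem_univ i) hi₀ hD
      exact ⟨x, e, hx⟩
  · rintro hb ⟨x, e, hx⟩
    obtain ⟨L, hL⟩ := exists_tendsto_onFinset_add_mul q α f φ hq Finset.univ x e
      (fun i _ => (hb e i).1) fun i _ => (hb e i).2
    exact not_tendsto_atTop_of_tendsto_nhds hL.norm hx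
end

section
/- Let d ≥ 1 and n ≥ 1 be integers and let g_1, h_1, …, g_n, h_n ∈ GL_d(ℂ). For an invertible matrix a and a matrix M, write M^a = a M a⁻¹, and set P_i = [g_{i+1}, h_{i+1}]⋯[g_n, h_n] (so P_n is the identity), where [x,y] = x y x⁻¹ y⁻¹. Define the linear map L from 2n-tuples of d×d complex matrices to d×d complex matrices by L(X_1, Y_1, …, X_n, Y_n) = Σ_{i=1}^n ( X_i^{g_i h_i^{-1}} − X_i^{g_i} + Y_i^{g_i} − Y_i )^{P_i^{-1} h_i}. Then for a d×d complex matrix Z, one has tr(Z · L(X_1,…,Y_n)) = 0 for all (X_1, Y_1, …, X_n, Y_n) if and only if Z commutes with g_i and with h_i for every i = 1, …, n. -/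
/-- Conjugation of a matrix by an element of `GL_d(ℂ)`: `M^a = a·M·a⁻¹`. -/
noncomputable def mconj {d : ℕ} (a : Matrix.GeneralLinearGroup (Fin d) ℂ)
    (M : Matrix (Fin d) (Fin d) ℂ) : Matrix (Fin d) (Fin d) ℂ :=
  (a : Matrix (Fin d) (Fin d) ℂ) * M *
    ((a⁻¹ : Matrix.GeneralLinearGroup (Fin d) ℂ) : Matrix (Fin d) (Fin d) ℂ)

open scoped commutatorElement

/-- The tail products `P_i = [g_{i+1},h_{i+1}]⋯[g_n,h_n]` (so the last one is `1`). -/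
noncomputable def tailCommProd {d n : ℕ}
    (g h : Fin n → Matrix.GeneralLinearGroup (Fin d) ℂ) (i : Fin n) :
    Matrix.GeneralLinearGroup (Fin d) ℂ :=
  ((List.ofFn fun j : Fin n => ⁅g j, h j⁆).drop ((i : ℕ) + 1)).prod

/-- The derivative of `Φ_{G,n}` at `(g₁,h₁,…,gₙ,hₙ)`:
`L(X₁,Y₁,…,Xₙ,Yₙ) = Σᵢ (Xᵢ^{gᵢhᵢ⁻¹} − Xᵢ^{gᵢ} + Yᵢ^{gᵢ} − Yᵢ)^{Pᵢ⁻¹hᵢ}`. -/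
noncomputable def commutatorDerivative {d n : ℕ}
    (g h : Fin n → Matrix.GeneralLinearGroup (Fin d) ℂ)
    (X Y : Fin n → Matrix (Fin d) (Fin d) ℂ) : Matrix (Fin d) (Fin d) ℂ :=
  ∑ i : Fin n, mconj ((tailCommProd g h i)⁻¹ * h i)
    (mconj (g i * (h i)⁻¹) (X i) - mconj (g i) (X i) + mconj (g i) (Y i) - Y i)

/-!
Moving each conjugation onto `Z` by `tr (Z · M^a) = tr (Z^{a⁻¹} · M)`, the summands of `L`
decouple, and the `i`-th one vanishes for all `Xᵢ, Yᵢ` iff `Wᵢ = Z^{(Pᵢ⁻¹hᵢ)⁻¹}` commutes with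
`gᵢ` and `hᵢ`. If `Z` commutes with every `gⱼ, hⱼ` for `j > i`, it commutes with `Pᵢ`, so
`Wᵢ = Z^{hᵢ⁻¹}`, which commutes with `gᵢ, hᵢ` iff `Z` does. Downward induction on `i` finishes.
-/

theorem List.exists_le_of_mem_drop_ofFn {α : Type*} {n k : ℕ} {f : Fin n → α} {x : α}
    (hx : x ∈ (List.ofFn f).drop k) : ∃ j : Fin n, k ≤ j ∧ f j = x := by
  obtain ⟨j, hj, rfl⟩ := List.mem_drop_iff_getElem.mp hx
  exact ⟨⟨k + j, by rw [List.length_ofFn] at hj; omega⟩, Nat.le_add_right k j, by simp⟩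

section Units

variable {M : Type*} [Monoid M] {z : M} {a b : Mˣ}

theorem Commute.units_commutatorElement_right (ha : Commute z a) (hb : Commute z b) :
    Commute z ↑⁅a, b⁆ := by
  rw [commutatorElement_def, Units.val_mul, Units.val_mul, Units.val_mul]
  exact ((ha.mul_right hb).mul_right ha.units_inv_right).mul_right hb.units_inv_right

theorem Commute.units_mul_inv_right_iff (ha : Commute z a) :
    Commute z ↑(a * b⁻¹) ↔ Commute z b := by
  refine ⟨fun hab => ?_, fun hb => ?_⟩
  · have hbinv := ha.units_inv_right.mul_right hab
    rwa [← Units.val_mul, inv_mul_cancel_left, Commute.units_inv_right_iff] at hbinv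
  · rw [Units.val_mul]
    exact ha.mul_right hb.units_inv_right

end Units

theorem Matrix.forall_trace_mul_add_trace_mul_eq_zero_iff {m n p R : Type*} [Fintype m]
    [Fintype n] [Fintype p] [NonAssocSemiring R] {A : Matrix m n R} {B : Matrix m p R} :
    (∀ (X : Matrix n m R) (Y : Matrix p m R), (A * X).trace + (B * Y).trace = 0) ↔
      A = 0 ∧ B = 0 := by
  refine ⟨fun h => ⟨?_, ?_⟩, fun ⟨hA, hB⟩ X Y => by simp [hA, hB]⟩
  · exact Matrix.ext_iff_trace_mul_right.mpr fun X => by simpa using h X 0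
  · exact Matrix.ext_iff_trace_mul_right.mpr fun Y => by simpa using h 0 Y

theorem Fintype.forall_sum_apply_eq_zero_iff {ι M N R : Type*} [Fintype ι] [DecidableEq ι]
    [Zero M] [Zero N] [AddCommMonoid R] (f : ι → M → N → R) (hf : ∀ i, f i 0 0 = 0) :
    (∀ X : ι → M, ∀ Y : ι → N, ∑ i, f i (X i) (Y i) = 0) ↔ ∀ i x y, f i x y = 0 := by
  refine ⟨fun h i x y => ?_, fun h X Y => Finset.sum_eq_zero fun i _ => h i _ _⟩
  have hsum := h (Pi.single i x) (Pi.single i y)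
  rwa [Fintype.sum_eq_single i fun j hj => by simp [Pi.single_eq_of_ne hj, hf],
    Pi.single_eq_same, Pi.single_eq_same] at hsum

section mconj

open Matrix

variable {d : ℕ} (a b : GL (Fin d) ℂ) (Z : Matrix (Fin d) (Fin d) ℂ)

theorem mconj_mul (M : Matrix (Fin d) (Fin d) ℂ) : mconj (a * b) M = mconj a (mconj b M) := by
  simp [mconj, mul_assoc]

theorem trace_mul_mconj (M : Matrix (Fin d) (Fin d) ℂ) :
    trace (Z * mconj a M) = trace (mconj a⁻¹ Z * M) := by
  simp only [mconj, inv_inv, ← mul_assoc]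
  rw [trace_mul_comm]
  simp only [← mul_assoc]

theorem mconj_eq_self_iff : mconj a Z = Z ↔ Commute Z a := by
  rw [mconj, Units.mul_inv_eq_iff_eq_mul, eq_comm]
  rfl

theorem mconj_inv_eq_self_iff : mconj a⁻¹ Z = Z ↔ Commute Z a := by
  rw [mconj_eq_self_iff, Commute.units_inv_right_iff]

theorem commute_mconj_inv_iff : Commute (mconj a⁻¹ Z) a ↔ Commute Z a := by
  have hleft : (a : Matrix (Fin d) (Fin d) ℂ) * mconj a⁻¹ Z = Z * a := by
    simp [mconj, ← mul_assoc]
  rw [Commute, SemiconjBy, hleft, Units.mul_left_inj, mconj_inv_eq_self_iff]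

theorem commute_mconj_inv_mul_and_commute_iff {c : GL (Fin d) ℂ} (hc : Commute Z c) :
    Commute (mconj (c⁻¹ * b)⁻¹ Z) a ∧ Commute (mconj (c⁻¹ * b)⁻¹ Z) b ↔
      Commute Z a ∧ Commute Z b := by
  rw [_root_.mul_inv_rev, inv_inv, mconj_mul, (mconj_eq_self_iff c Z).mpr hc,
    commute_mconj_inv_iff b Z]
  exact and_congr_left fun hb => by rw [(mconj_inv_eq_self_iff b Z).mpr hb]

theorem forall_trace_mul_mconj_sub_eq_zero_iff :
    (∀ X Y : Matrix (Fin d) (Fin d) ℂ,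
        trace (Z * (mconj (a * b⁻¹) X - mconj a X + mconj a Y - Y)) = 0) ↔
      Commute Z a ∧ Commute Z b := by
  have hsplit : ∀ X Y : Matrix (Fin d) (Fin d) ℂ,
      trace (Z * (mconj (a * b⁻¹) X - mconj a X + mconj a Y - Y)) =
        trace ((mconj (a * b⁻¹)⁻¹ Z - mconj a⁻¹ Z) * X) + trace ((mconj a⁻¹ Z - Z) * Y) := by
    intro X Y
    simp only [mul_sub, mul_add, sub_mul, trace_sub, trace_add, trace_mul_mconj]
    ring
  simp only [hsplit, forall_trace_mul_add_trace_mul_eq_zero_iff, sub_eq_zero]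
  rw [and_comm, mconj_inv_eq_self_iff a Z]
  refine and_congr_right fun ha => ?_
  rw [(mconj_inv_eq_self_iff a Z).mpr ha, mconj_inv_eq_self_iff, ha.units_mul_inv_right_iff]

end mconj

theorem commute_tailCommProd {d n : ℕ} {g h : Fin n → GL (Fin d) ℂ}
    {Z : Matrix (Fin d) (Fin d) ℂ} {i : Fin n}
    (H : ∀ j, i < j → Commute Z (g j) ∧ Commute Z (h j)) :
    Commute Z (tailCommProd g h i) := by
  rw [tailCommProd, ← Units.coeHom_apply, map_list_prod]
  refine Commute.list_prod_right _ _ fun x hx => ?_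
  obtain ⟨u, hu, rfl⟩ := List.mem_map.mp hx
  obtain ⟨j, hij, rfl⟩ := List.exists_le_of_mem_drop_ofFn hu
  obtain ⟨hg, hh⟩ := H j hij
  exact hg.units_commutatorElement_right hh

theorem forall_trace_mul_commutatorDerivative_eq_zero_iff {d n : ℕ}
    (g h : Fin n → GL (Fin d) ℂ) (Z : Matrix (Fin d) (Fin d) ℂ) :
    (∀ X Y, (Z * commutatorDerivative g h X Y).trace = 0) ↔
      ∀ i, Commute (mconj ((tailCommProd g h i)⁻¹ * h i)⁻¹ Z) (g i) ∧
        Commute (mconj ((tailCommProd g h i)⁻¹ * h i)⁻¹ Z) (h i) := by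
  simp only [commutatorDerivative, Finset.mul_sum, Matrix.trace_sum, trace_mul_mconj]
  exact (Fintype.forall_sum_apply_eq_zero_iff
      (fun i X Y => (mconj ((tailCommProd g h i)⁻¹ * h i)⁻¹ Z *
        (mconj (g i * (h i)⁻¹) X - mconj (g i) X + mconj (g i) Y - Y)).trace)
      fun i => by simp [mconj]).trans
    (forall_congr' fun i => forall_trace_mul_mconj_sub_eq_zero_iff _ _ _)

theorem trace_orthogonal_commutatorDerivative_iff_general (d n : ℕ)
    (g h : Fin n → Matrix.GeneralLinearGroup (Fin d) ℂ)
    (Z : Matrix (Fin d) (Fin d) ℂ) :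
    (∀ X Y : Fin n → Matrix (Fin d) (Fin d) ℂ,
        Matrix.trace (Z * commutatorDerivative g h X Y) = 0) ↔
      ∀ i : Fin n, Commute Z ((g i : Matrix (Fin d) (Fin d) ℂ)) ∧
        Commute Z ((h i : Matrix (Fin d) (Fin d) ℂ)) := by
  rw [forall_trace_mul_commutatorDerivative_eq_zero_iff]
  refine ⟨fun H i => ?_, fun H i => ?_⟩
  · induction i using WellFoundedGT.induction with
    | _ i ih =>
      exact (commute_mconj_inv_mul_and_commute_iff _ _ _ (commute_tailCommProd ih)).mp (H i)
  · exact (commute_mconj_inv_mul_and_commute_iff _ _ _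
      (commute_tailCommProd fun j _ => H j)).mpr (H i)

/-- A matrix `Z` is trace-orthogonal to the image of the derivative of `Φ_{G,n}` at
`(g₁,h₁,…,gₙ,hₙ)` if and only if `Z` commutes with all `gᵢ` and `hᵢ`. -/
theorem trace_orthogonal_commutatorDerivative_iff (d n : ℕ) (hd : 1 ≤ d) (hn : 1 ≤ n)
    (g h : Fin n → Matrix.GeneralLinearGroup (Fin d) ℂ)
    (Z : Matrix (Fin d) (Fin d) ℂ) :
    (∀ X Y : Fin n → Matrix (Fin d) (Fin d) ℂ,
        Matrix.trace (Z * commutatorDerivative g h X Y) = 0) ↔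
      ∀ i : Fin n, Commute Z ((g i : Matrix (Fin d) (Fin d) ℂ)) ∧
        Commute Z ((h i : Matrix (Fin d) (Fin d) ℂ)) :=
  trace_orthogonal_commutatorDerivative_iff_general d n g h Z
end

section
/- Let d ≥ 2 be an integer, let L = {1, …, d}, and let I = L×L ∖ {(d,d)}. Let Γ₃ be the simple graph on vertex set I in which two distinct vertices are adjacent iff they can be written (in some order) as (i,j) and (j,l) with j = ⌈(i+l)/2⌉ + δ_{i,l}, where δ_{i,l} = 1 if i = l and 0 otherwise. For an integer t with −d < t < d let I_t = {(i,j) ∈ I : i − j = t}. For −d < l < d define the subgraph Δ_l of Γ₃ as follows: for l < 0, Δ_l has vertex set I_l ∪ I_{l+1} and its edges are the edges of Γ₃ with both endpoints in I_l or with one endpoint in I_l and one in I_{l+1}; for l > 0, Δ_l has vertex set I_l ∪ I_{l−1} and its edges are the edges of Γ₃ with both endpoints in I_l or with one endpoint in I_l and one in I_{l−1}; for l = 0, Δ_0 has vertex set I_1 ∪ I_{−1} and its edges are the edges of Γ₃ with one endpoint in I_1 and one in I_{−1}. Then for every l with −d < l < d, the graph Δ_l is a forest (contains no cycles) and every vertex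 of Δ_l has degree at most 3. -/
/-- The vertex set `I = L×L ∖ {(d,d)}`, where `L = {1,…,d}`. -/
def slVertexSet (d : ℤ) : Set (ℤ × ℤ) :=
  {v | 1 ≤ v.1 ∧ v.1 ≤ d ∧ 1 ≤ v.2 ∧ v.2 ≤ d ∧ v ≠ (d, d)}

/-- The diagonal `I_t = {(i,j) ∈ I : i − j = t}`. -/
def slDiagSet (d t : ℤ) : Set (ℤ × ℤ) :=
  {v | v ∈ slVertexSet d ∧ v.1 - v.2 = t}

/-- The base relation of the graph `Γ₃`: `u = (i,j)`, `v = (j,l)` with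
`j = ⌈(i+l)/2⌉ + δ_{i,l}`, both vertices lying in `I`. -/
def slGammaRel (d : ℤ) (u v : ℤ × ℤ) : Prop :=
  u ∈ slVertexSet d ∧ v ∈ slVertexSet d ∧
    ∃ i j l : ℤ, u = (i, j) ∧ v = (j, l) ∧
      j = ⌈(((i + l : ℤ) : ℚ)) / 2⌉ + (if i = l then 1 else 0)

/-- The graph `Γ₃` on `I`: two distinct vertices are adjacent iff, in some order, they can
be written as `(i,j)` and `(j,l)` with `j = ⌈(i+l)/2⌉ + δ_{i,l}`. -/
def slGammaGraph (d : ℤ) : SimpleGraph (ℤ × ℤ) :=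
  SimpleGraph.fromRel (slGammaRel d)

/-- The endpoint condition defining the edges of the subgraph `Δ_l` of `Γ₃`:
for `l < 0`, both endpoints in `I_l`, or one in `I_l` and one in `I_{l+1}`;
for `l > 0`, both endpoints in `I_l`, or one in `I_l` and one in `I_{l−1}`;
for `l = 0`, one endpoint in `I_1` and one in `I_{−1}`. -/
def slDeltaCond (d l : ℤ) (u v : ℤ × ℤ) : Prop :=
  if l < 0 then
    (u ∈ slDiagSet d l ∧ v ∈ slDiagSet d l) ∨
      (u ∈ slDiagSet d l ∧ v ∈ slDiagSet d (l + 1))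
  else if 0 < l then
    (u ∈ slDiagSet d l ∧ v ∈ slDiagSet d l) ∨
      (u ∈ slDiagSet d l ∧ v ∈ slDiagSet d (l - 1))
  else (u ∈ slDiagSet d 1 ∧ v ∈ slDiagSet d (-1))

/-- The subgraph `Δ_l` of `Γ₃`: its edges are the edges of `Γ₃` whose endpoints satisfy,
in some order, the condition `slDeltaCond d l`. -/
def slDeltaGraph (d l : ℤ) : SimpleGraph (ℤ × ℤ) :=
  SimpleGraph.fromRel (fun u v => (slGammaGraph d).Adj u v ∧ slDeltaCond d l u v)

/-! Every edge of `Δ_l` joins a vertex `v` to its parent `p v`, where `p` is the affine map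
`(i, j) ↦ (i + l, i)` for `l < 0`, `(i, j) ↦ (j, j - l)` for `l > 0` and
`(i, j) ↦ (i + 1, j - 1)` for `l = 0`; it strictly increases the rank `-i` (for `l < 0`),
resp. `-j` (for `l ≥ 0`). The two neighbours of a vertex of least rank on a cycle would both
have to be its parent, so there is no cycle. Besides its parent, a vertex has at most two
neighbours, which gives the degree bound. -/

namespace SimpleGraph

theorem isAcyclic_of_adj_parent {V α : Type*} [LinearOrder α] {G : SimpleGraph V}
    (f : V → α) (p : V → V) (hp : ∀ ⦃v w⦄, G.Adj v w → w = p v ∨ v = p w)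
    (hf : ∀ v, G.Adj v (p v) → f v < f (p v)) : G.IsAcyclic := by
  classical
  intro v c hc
  obtain ⟨m, hm, hmin⟩ := c.support.toFinset.exists_min_image f ⟨v, by simp⟩
  rw [List.mem_toFinset] at hm
  set c' := c.rotate m hm
  have hc' : c'.IsCycle := hc.rotate hm
  have eq_parent : ∀ x ∈ c'.support, G.Adj m x → x = p m := fun x hx hadj =>
    (hp hadj).resolve_right fun hmx => by
      have := hmin x (List.mem_toFinset.2 ((c.mem_support_rotate_iff m hm).1 hx))
      exact (hf x (hmx ▸ hadj.symm)).not_ge (hmx ▸ this)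
  exact hc'.snd_ne_penultimate <|
    (eq_parent _ (c'.getVert_mem_support 1) (c'.adj_snd hc'.not_nil)).trans
      (eq_parent _ (c'.getVert_mem_support _) (c'.adj_penultimate hc'.not_nil).symm).symm

end SimpleGraph

theorem two_mul_ceil_intCast_div_two (n : ℤ) :
    2 * ⌈(n : ℚ) / 2⌉ = n ∨ 2 * ⌈(n : ℚ) / 2⌉ = n + 1 := by
  have := Rat.ceil_intCast_div_natCast n 2
  push_cast at this
  omega

theorem slGammaRel.arith {d : ℤ} {u v : ℤ × ℤ} (h : slGammaRel d u v) :
    v.1 = u.2 ∧ (u.1 = v.2 ∧ u.2 = u.1 + 1 ∨ 2 * u.2 = u.1 + v.2 ∨ 2 * u.2 = u.1 + v.2 + 1) := by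
  obtain ⟨-, -, i, j, l, rfl, rfl, hj⟩ := h
  have := two_mul_ceil_intCast_div_two (i + l)
  refine ⟨rfl, ?_⟩
  split_ifs at hj <;> omega

theorem slDeltaGraph_adj_iff {d t : ℤ} {v w : ℤ × ℤ} :
    (slDeltaGraph d t).Adj v w ↔ v ≠ w ∧ (slGammaRel d v w ∨ slGammaRel d w v) ∧
      (slDeltaCond d t v w ∨ slDeltaCond d t w v) := by
  simp only [slDeltaGraph, slGammaGraph, SimpleGraph.fromRel_adj]
  tauto

def slDeltaParent (t : ℤ) (v : ℤ × ℤ) : ℤ × ℤ :=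
  if t < 0 then (v.1 + t, v.1) else if 0 < t then (v.2, v.2 - t) else (v.1 + 1, v.2 - 1)

def slDeltaChildren (t : ℤ) (v : ℤ × ℤ) : Finset (ℤ × ℤ) :=
  if t < 0 then {(v.2, v.2 - t), (v.2, v.2 - t - 1)}
  else if 0 < t then {(v.1 + t, v.1), (v.1 + t - 1, v.1)}
  else {(v.1 - 1, v.2 + 1)}

def slDeltaRank (t : ℤ) (v : ℤ × ℤ) : ℤ :=
  if t < 0 then -v.1 else -v.2

theorem slDeltaRank_lt_rank_parent (t : ℤ) (v : ℤ × ℤ) :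
    slDeltaRank t v < slDeltaRank t (slDeltaParent t v) := by
  unfold slDeltaRank slDeltaParent
  split_ifs <;> omega

theorem card_slDeltaChildren_le_two (t : ℤ) (v : ℤ × ℤ) : (slDeltaChildren t v).card ≤ 2 := by
  unfold slDeltaChildren
  split_ifs <;> simp only [Finset.card_le_two, Finset.card_singleton, Nat.one_le_ofNat]

theorem slDeltaGraph_adj_eq_parent_or_child {d t : ℤ} {v w : ℤ × ℤ}
    (h : (slDeltaGraph d t).Adj v w) :
    w = slDeltaParent t v ∨ v = slDeltaParent t w ∧ w ∈ slDeltaChildren t v := by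
  obtain ⟨hne, hrel, hcond⟩ := slDeltaGraph_adj_iff.1 h
  obtain ⟨h₁, h₂⟩ | ⟨h₁, h₂⟩ := hrel.imp slGammaRel.arith slGammaRel.arith <;>
  · obtain ⟨a, b⟩ := v
    obtain ⟨c, e⟩ := w
    simp only [slDeltaCond, slDiagSet, Set.mem_ofPred_eq] at hcond
    simp only [slDeltaParent, slDeltaChildren, ne_eq, Prod.ext_iff] at hne h₁ h₂ ⊢
    split_ifs at hcond ⊢ <;>
      simp only [Finset.mem_insert, Finset.mem_singleton, Prod.ext_iff] <;> omega

theorem slDeltaGraph_acyclic_degree_le_three_general (d : ℤ) (l : ℤ) :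
    (slDeltaGraph d l).IsAcyclic ∧
      ∀ v : ℤ × ℤ, {w | (slDeltaGraph d l).Adj v w}.Finite ∧
        {w | (slDeltaGraph d l).Adj v w}.ncard ≤ 3 := by
  refine ⟨SimpleGraph.isAcyclic_of_adj_parent (slDeltaRank l) (slDeltaParent l)
    (fun _ _ h => (slDeltaGraph_adj_eq_parent_or_child h).imp_right And.left)
    (fun v _ => slDeltaRank_lt_rank_parent l v), fun v => ?_⟩
  set S := insert (slDeltaParent l v) (slDeltaChildren l v)
  have hsub : {w | (slDeltaGraph d l).Adj v w} ⊆ S := fun w h => by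
    simpa [S] using (slDeltaGraph_adj_eq_parent_or_child h).imp_right And.right
  refine ⟨S.finite_toSet.subset hsub, ?_⟩
  calc {w | (slDeltaGraph d l).Adj v w}.ncard
      ≤ S.card := (Set.ncard_le_ncard hsub S.finite_toSet).trans_eq (Set.ncard_coe_finset S)
    _ ≤ (slDeltaChildren l v).card + 1 := Finset.card_insert_le _ _
    _ ≤ 3 := by linarith [card_slDeltaChildren_le_two l v]

/-- For every `l` with `−d < l < d`, the graph `Δ_l` is a forest and every vertex has
degree at most `3`. -/
theorem slDeltaGraph_acyclic_degree_le_three (d : ℤ) (hd : 2 ≤ d) (l : ℤ)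
    (hl1 : -d < l) (hl2 : l < d) :
    (slDeltaGraph d l).IsAcyclic ∧
      ∀ v : ℤ × ℤ, {w | (slDeltaGraph d l).Adj v w}.Finite ∧
        {w | (slDeltaGraph d l).Adj v w}.ncard ≤ 3 :=
  slDeltaGraph_acyclic_degree_le_three_general d l
end
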